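/- For every natural number n, consider the Kripke frame given by the powerset of {0,…,n−1} ordered by inclusion (a finite Boolean algebra), with initial world ∅, and the Kripke model N on this frame in which the propositional variable b_i is true at a world B exactly when i ∈ B. Then b₀,…,b_{n−1} are n independent buttons at the world ∅ in N. -/
import Mathlib


namespace GrzPaper

/-- Propositional modal formulas, built from variables, falsum, implication and box. -/
inductive Formula : Type
  | var : ℕ → Formula
  | fls : Formula
  | impl : Formula → Formula → Formula
  | box : Formula → Formula
deriving DecidableEq

namespace Formula

def neg (φ : Formula) : Formula := impl φ fls
def tru : Formula := neg fls
def disj (φ ψ : Formula) : Formula := impl (neg φ) ψ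
def conj (φ ψ : Formula) : Formula := neg (impl φ (neg ψ))
def dia (φ : Formula) : Formula := neg (box (neg φ))

/-- Uniform substitution. -/
def subst (σ : ℕ → Formula) : Formula → Formula
  | var n => σ n
  | fls => fls
  | impl a b => impl (subst σ a) (subst σ b)
  | box a => box (subst σ a)

/-- Propositional (Boolean) evaluation, treating variables and boxed formulas as atoms. -/
def evalProp (v : Formula → Bool) : Formula → Bool
  | var n => v (var n)
  | fls => false
  | impl a b => !(evalProp v a) || evalProp v b
  | box a => v (box a)

/-- A propositional tautology: true under every Boolean valuation of the atoms
(variables and boxed subformulas). -/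
def Tautology (φ : Formula) : Prop := ∀ v, evalProp v φ = true

end Formula

open Formula

/-- A normal modal logic: contains all propositional tautologies and all instances of K,
closed under modus ponens, necessitation and uniform substitution. -/
structure IsNormalLogic (L : Set Formula) : Prop where
  taut : ∀ φ, Tautology φ → φ ∈ L
  axK : ∀ φ ψ, impl (box (impl φ ψ)) (impl (box φ) (box ψ)) ∈ L
  mp : ∀ φ ψ, impl φ ψ ∈ L → φ ∈ L → ψ ∈ L
  nec : ∀ φ, φ ∈ L → box φ ∈ L
  subst : ∀ φ σ, φ ∈ L → φ.subst σ ∈ L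

/-- The normal modal logic generated by a set of axioms: the smallest normal modal
logic containing them. -/
def Generated (Ax : Set Formula) : Set Formula :=
  ⋂₀ {L | IsNormalLogic L ∧ Ax ⊆ L}

def pv : Formula := var 0
def qv : Formula := var 1

def axT : Formula := impl (box pv) pv
def axFour : Formula := impl (box pv) (box (box pv))
def axGrz : Formula := impl (box (impl (box (impl pv (box pv))) pv)) pv
def axPoint2 : Formula := impl (dia (box pv)) (box (dia pv))
def axPoint3 : Formula := disj (box (impl (box pv) qv)) (box (impl (box qv) pv))

/-- penultimate(φ) : φ ∧ ◇¬φ ∧ □(¬φ → □¬φ). -/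
def penultimate (φ : Formula) : Formula :=
  conj φ (conj (dia (neg φ)) (box (impl (neg φ) (box (neg φ)))))

/-- contingent(φ) : ◇φ ∧ ◇¬φ. -/
def contingent (φ : Formula) : Formula := conj (dia φ) (dia (neg φ))

/-- The axiom Grz* : contingent(p) → ◇(penultimate(p) ∨ penultimate(¬p)). -/
def axGrzStar : Formula :=
  impl (contingent pv) (dia (disj (penultimate pv) (penultimate (neg pv))))

def Grz : Set Formula := Generated {axGrz}
def GrzStarLogic : Set Formula := Generated {axGrzStar}
def S4GrzStar : Set Formula := Generated {axT, axFour, axGrzStar}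
def Grz2 : Set Formula := Generated {axGrz, axPoint2}
def Grz3 : Set Formula := Generated {axGrz, axPoint3}
def KLogic : Set Formula := Generated ∅

/-- A Kripke model: an accessibility relation together with a valuation. -/
structure KripkeModel (W : Type) where
  rel : W → W → Prop
  val : ℕ → W → Prop

/-- Satisfaction of a modal formula at a world of a Kripke model. -/
def Satisfies {W : Type} (M : KripkeModel W) : W → Formula → Prop
  | w, .var n => M.val n w
  | _, .fls => False
  | w, .impl a b => Satisfies M w a → Satisfies M w b
  | w, .box a => ∀ v, M.rel w v → Satisfies M v a

/-- Validity of a formula on a Kripke frame. -/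
def ValidOnFrame (W : Type) (R : W → W → Prop) (φ : Formula) : Prop :=
  ∀ (val : ℕ → W → Prop) (w : W), Satisfies ⟨R, val⟩ w φ

/-- A model labeling of (M,w₀) for (N,u₀): a substitution σ such that every formula is
true at (M,w₀) iff its σ-instance is true at (N,u₀). -/
def ModelLabeling {W U : Type} (M : KripkeModel W) (w0 : W) (N : KripkeModel U) (u0 : U)
    (σ : ℕ → Formula) : Prop :=
  ∀ φ : Formula, Satisfies M w0 φ ↔ Satisfies N u0 (φ.subst σ)

/-- A frame labeling of the frame (W,R) with initial node w₀ for the pointed model (N,u₀). -/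
def FrameLabeling {W U : Type} (R : W → W → Prop) (w0 : W) (N : KripkeModel U) (u0 : U)
    (Φ : W → Formula) : Prop :=
  Satisfies N u0 (Φ w0) ∧
  (∀ u, N.rel u0 u → ∀ w, Satisfies N u (Φ w) →
    ∀ w', (Satisfies N u (dia (Φ w')) ↔ R w w')) ∧
  (∀ u, N.rel u0 u → ∃! w, Satisfies N u (Φ w))

def bigOr : List Formula → Formula
  | [] => fls
  | φ :: l => disj φ (bigOr l)

def bigAnd : List Formula → Formula
  | [] => tru
  | φ :: l => conj φ (bigAnd l)

open Classical in
/-- The disjunction ⋁ {Φ w : P w}. -/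
noncomputable def labelFormula {W : Type} [Fintype W] (Φ : W → Formula) (P : W → Prop) :
    Formula :=
  bigOr ((Finset.univ.filter P).toList.map Φ)

/-- Θ_A : the formula asserting that the button pattern is exactly A. -/
noncomputable def Theta {n : ℕ} (b : Fin n → Formula) (A : Finset (Fin n)) : Formula :=
  bigAnd ((Finset.univ : Finset (Fin n)).toList.map
    (fun i => if i ∈ A then box (b i) else neg (box (b i))))

/-- b₀,…,b_{n−1} are independent buttons at u₀: none is pushed (necessary) at u₀, and
necessarily, whenever the button pattern is exactly A, every larger pattern is possible. -/
def IndependentButtons {U : Type} (N : KripkeModel U) (u0 : U) {n : ℕ}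
    (b : Fin n → Formula) : Prop :=
  (∀ i, ¬ Satisfies N u0 (box (b i))) ∧
  ∀ A : Finset (Fin n), ∀ u, N.rel u0 u → Satisfies N u (Theta b A) →
    ∀ A' : Finset (Fin n), A ⊆ A' → Satisfies N u (dia (Theta b A'))

/-- r₀,…,r_{n−1} form a ratchet of length n at u₀. -/
def Ratchet {U : Type} (N : KripkeModel U) (u0 : U) {n : ℕ} (r : Fin n → Formula) : Prop :=
  (∀ i : Fin n, (i.val = 0 → Satisfies N u0 (box (r i))) ∧
      (0 < i.val → ¬ Satisfies N u0 (box (r i)))) ∧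
  (∀ u, N.rel u0 u → ∀ i j : Fin n, i < j →
      Satisfies N u (box (r j)) → Satisfies N u (box (r i))) ∧
  (∀ u, N.rel u0 u → ∀ i : Fin n, 0 < i.val →
      (∀ j : Fin n, Satisfies N u (box (r j)) ↔ j < i) →
        ∃ v, N.rel u v ∧ ∀ j : Fin n, Satisfies N v (box (r j)) ↔ j ≤ i)

/-- A (finite) tree order: a partial order with a least element in which the set of
predecessors of every element is linearly ordered. -/
def IsTreeOrder {W : Type} (R : W → W → Prop) : Prop :=
  IsPartialOrder W R ∧ (∃ r, ∀ x, R r x) ∧ ∀ x a b, R a x → R b x → R a b ∨ R b a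

/-- A baled tree order: a partial order with a greatest element t whose removal
leaves a tree. -/
def IsBaledTreeOrder {W : Type} (R : W → W → Prop) : Prop :=
  IsPartialOrder W R ∧ ∃ t : W, (∀ x, R x t) ∧
    (∃ r, r ≠ t ∧ ∀ x, x ≠ t → R r x) ∧
    (∀ x a b, x ≠ t → R a x → R b x → R a b ∨ R b a)

/-- Height of a node: the number of its strict predecessors. -/
noncomputable def heightOf {W : Type} (R : W → W → Prop) (x : W) : ℕ :=
  Nat.card {y : W // R y x ∧ y ≠ x}

/-- y is an immediate successor of x. -/
def ImmSucc {W : Type} (R : W → W → Prop) (x y : W) : Prop :=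
  R x y ∧ x ≠ y ∧ ∀ z, R x z → R z y → z = x ∨ z = y

def IsMaximal {W : Type} (R : W → W → Prop) (x : W) : Prop := ∀ z, R x z → z = x

/-- A regular finite tree: all maximal elements have the same height, and any two
elements of the same height have the same number of immediate successors. -/
def IsRegularTree {W : Type} (R : W → W → Prop) : Prop :=
  IsTreeOrder R ∧
  (∀ x y, IsMaximal R x → IsMaximal R y → heightOf R x = heightOf R y) ∧
  (∀ x y, heightOf R x = heightOf R y →
    Nat.card {z : W // ImmSucc R x z} = Nat.card {z : W // ImmSucc R y z})


/-- The Kripke model whose frame is the powerset of {0,…,n−1} ordered by inclusion, with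
the variable b_i true at a world B exactly when i ∈ B. -/
def powersetModel (n : ℕ) : KripkeModel (Finset (Fin n)) :=
  ⟨(· ⊆ ·), fun k B => ∃ i : Fin n, (i : ℕ) = k ∧ i ∈ B⟩

/-- In the powerset model, the variables b₀,…,b_{n−1} are n independent
buttons at the initial world ∅. -/
theorem statement17 (n : ℕ) :
    IndependentButtons (powersetModel n) (∅ : Finset (Fin n))
      (fun i : Fin n => Formula.var (i : ℕ)) := by
  classical
  have satconj : ∀ (u : Finset (Fin n)) (φ ψ : Formula),
      Satisfies (powersetModel n) u (conj φ ψ) ↔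
        Satisfies (powersetModel n) u φ ∧ Satisfies (powersetModel n) u ψ := by
    intro u φ ψ
    simp only [conj, neg, Satisfies]
    tauto
  have satAnd : ∀ (l : List Formula) (u : Finset (Fin n)),
      Satisfies (powersetModel n) u (bigAnd l) ↔
        ∀ φ ∈ l, Satisfies (powersetModel n) u φ := by
    intro l
    induction l with
    | nil => intro u; simp [bigAnd, tru, neg, Satisfies]
    | cons φ l ih =>
        intro u
        simp [bigAnd, satconj, ih u]
  have satbox : ∀ (u : Finset (Fin n)) (i : Fin n),
      Satisfies (powersetModel n) u (box (var (i : ℕ))) ↔ i ∈ u := by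
    intro u i
    constructor
    · intro h
      have := h u (by simp [powersetModel])
      obtain ⟨j, hj, hjm⟩ := this
      have : j = i := Fin.ext hj
      exact this ▸ hjm
    · intro hi v huv
      exact ⟨i, rfl, huv hi⟩
  have satTheta : ∀ (u : Finset (Fin n)) (A : Finset (Fin n)),
      Satisfies (powersetModel n) u
        (Theta (fun i : Fin n => Formula.var (i : ℕ)) A) ↔ u = A := by
    intro u A
    rw [Theta, satAnd]
    constructor
    · intro h
      ext i
      have := h (if i ∈ A then box (var (i : ℕ)) else neg (box (var (i : ℕ))))
        (by simp)
      by_cases hiA : i ∈ A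
      · simp only [hiA, if_true] at this
        rw [satbox] at this
        simp [hiA, this]
      · simp only [hiA, if_false, neg, Satisfies] at this
        have hniu : i ∉ u := fun hiu => this (fun v huv => ⟨i, rfl, huv hiu⟩)
        simp [hiA, hniu]
    · rintro rfl φ hφ
      simp only [List.mem_map] at hφ
      obtain ⟨i, _, rfl⟩ := hφ
      by_cases hiA : i ∈ u
      · simpa [hiA] using (satbox u i).mpr hiA
      · simp only [hiA, if_false, neg, Satisfies]
        intro h
        exact hiA ((satbox u i).mp h)
  constructor
  · intro i h
    rw [satbox] at h
    simp at h
  · intro A u hu hθ A' hAA'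
    rw [satTheta] at hθ
    subst hθ
    simp only [dia, neg, Satisfies]
    intro h
    exact h A' hAA' ((satTheta A' A').mpr rfl)

end GrzPaper
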